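/- For all integers k, ℓ ≥ 4 and positive integers n, m: the wheel W_k = K_1 ∨ C_{k−1} satisfies S_b(W_k) = S_b(C_{k−1}) + 1; the fan F_ℓ = K_1 ∨ P_{ℓ−1} satisfies S_b(F_ℓ) = S_b(P_{ℓ−1}) + 1; and the complete split graph K_n ∨ K̄_m (the join of a complete graph on n vertices with an edgeless graph on m vertices) satisfies S_b(K_n ∨ K̄_m) = n + 1. -/

import Mathlib

/-!
Definitions for star colorings, star recoloring steps, the strict partial order `≺ₛ`,
star b-vertices, the star (b-)chromatic number, star degrees and related notions,
following Božović, Mesarič Štesl, Peterin,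
"On star b-chromatic number of a graph".
-/

variable {V : Type*}

/-- A proper coloring which is a *star coloring*: no path on four vertices
(vertices `a-b-x-y` with the three edges `ab`, `bx`, `xy`) is bicolored,
i.e. the union of any two color classes induces a star forest. -/
def IsStarColoring (G : SimpleGraph V) (c : V → ℕ) : Prop :=
  (∀ ⦃u w⦄, G.Adj u w → c u ≠ c w) ∧
  ∀ a b x y : V, G.Adj a b → G.Adj b x → G.Adj x y →
    a ≠ x → b ≠ y → a ≠ y → ¬(c a = c x ∧ c b = c y)

/-- The set of colors used by a coloring. -/
def colorsUsed [Fintype V] (c : V → ℕ) : Finset ℕ :=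
  Finset.image c Finset.univ

/-- `c'` is obtained from `c` by a *star recoloring step*: some color class `Vᵢ`
of the star coloring `c` is completely recolored, each of its vertices receiving one
of the remaining colors of `c`, so that the result `c'` is again a star coloring
(using the colors of `c` minus `i`). We write `c' ⊲ₛ c`. -/
def StarRecolorStep [Fintype V] (G : SimpleGraph V) (c' c : V → ℕ) : Prop :=
  IsStarColoring G c ∧ IsStarColoring G c' ∧
  ∃ i ∈ colorsUsed c,
    (∀ v, c v ≠ i → c' v = c v) ∧
    ∀ v, c v = i → c' v ≠ i ∧ c' v ∈ colorsUsed c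

/-- A minimal element of the strict partial order `≺ₛ` (the transitive closure of
the star recoloring step relation `⊲ₛ`): a star coloring on which no star
recoloring step can be performed. -/
def IsStarBColoring [Fintype V] (G : SimpleGraph V) (c : V → ℕ) : Prop :=
  IsStarColoring G c ∧ ∀ c', ¬ StarRecolorStep G c' c

/-- The *star b-chromatic number* `Sᵦ(G)`: the maximum number of colors used by a
minimal element of `≺ₛ`. -/
noncomputable def starBChromaticNumber [Fintype V] (G : SimpleGraph V) : ℕ :=
  sSup {n | ∃ c : V → ℕ, IsStarBColoring G c ∧ (colorsUsed c).card = n}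

/-- The *star chromatic number* `S(G)`: the minimum number of colors in a star coloring. -/
noncomputable def starChromaticNumber [Fintype V] (G : SimpleGraph V) : ℕ :=
  sInf {n | ∃ c : V → ℕ, IsStarColoring G c ∧ (colorsUsed c).card = n}

/-- A color `j` is *blocked* for the vertex `v` under the star coloring `c`
if `j` is the color of `v` itself, or recoloring `v` alone with `j` destroys
the star coloring property. -/
def ColorBlockedFor [DecidableEq V] (G : SimpleGraph V) (c : V → ℕ) (v : V) (j : ℕ) : Prop :=
  j = c v ∨ ¬ IsStarColoring G (Function.update c v j)

/-- A color of `c` which is not blocked for `v` is *available* for `v`. -/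
def ColorAvailableFor [Fintype V] [DecidableEq V] (G : SimpleGraph V) (c : V → ℕ)
    (v : V) (j : ℕ) : Prop :=
  j ∈ colorsUsed c ∧ ¬ ColorBlockedFor G c v j

/-- `u-b-x-w` is an induced path on four vertices of `G`. -/
def IsInducedP4 (G : SimpleGraph V) (u b x w : V) : Prop :=
  G.Adj u b ∧ G.Adj b x ∧ G.Adj x w ∧
  ¬ G.Adj u x ∧ ¬ G.Adj b w ∧ ¬ G.Adj u w ∧
  u ≠ x ∧ b ≠ w ∧ u ≠ w

/-- The relation `~ᵢ` on a color class: two vertices of the same color joined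
by an induced path on four vertices. -/
def P4Rel (G : SimpleGraph V) (c : V → ℕ) (u w : V) : Prop :=
  c u = c w ∧ ∃ b x, IsInducedP4 G u b x w

/-- The `P₄`-system of `v`: its equivalence class under the
reflexive-transitive closure of `~ᵢ`. -/
def P4System (G : SimpleGraph V) (c : V → ℕ) (v : V) : Set V :=
  {u | Relation.ReflTransGen (P4Rel G c) v u}

/-- An available color `j` for `v` is *blocked for the `P₄`-system of `v`* if every
recoloring of the color class of `v` (each vertex receiving an available color)
in which `v` is recolored by `j` yields a bicolored path on four vertices between
two vertices of the `P₄`-system of `v`. -/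
def BlockedForP4System [Fintype V] [DecidableEq V] (G : SimpleGraph V) (c : V → ℕ)
    (v : V) (j : ℕ) : Prop :=
  ∀ c' : V → ℕ,
    (∀ u, c u ≠ c v → c' u = c u) →
    (∀ u, c u = c v → ColorAvailableFor G c u (c' u)) →
    c' v = j →
    ∃ u w b x, u ∈ P4System G c v ∧ w ∈ P4System G c v ∧
      G.Adj u b ∧ G.Adj b x ∧ G.Adj x w ∧ u ≠ x ∧ b ≠ w ∧ u ≠ w ∧
      c' u = c' x ∧ c' b = c' w

/-- A *star b-vertex*: every available color for `v` is blocked for its `P₄`-system. -/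
def IsStarBVertex [Fintype V] [DecidableEq V] (G : SimpleGraph V) (c : V → ℕ) (v : V) : Prop :=
  ∀ j, ColorAvailableFor G c v j → BlockedForP4System G c v j

/-- The *star degree* `dˢ_G(v)` of a vertex: the maximum number of colors blocked
for `v` over all star colorings of `G`. -/
noncomputable def starDegree [Fintype V] [DecidableEq V] (G : SimpleGraph V) (v : V) : ℕ :=
  sSup {n | ∃ c : V → ℕ, IsStarColoring G c ∧
    {j | j ∈ colorsUsed c ∧ ColorBlockedFor G c v j}.ncard = n}

/-- The `mₛ`-degree of a graph: the largest `k` such that `G` has `k` vertices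
of star degree at least `k - 1` (equivalently, with the vertices ordered by
non-increasing star degree, `mₛ(G) = max {i : i - 1 ≤ dˢ_G(vᵢ)}`). -/
noncomputable def msDegree [Fintype V] [DecidableEq V] (G : SimpleGraph V) : ℕ :=
  sSup {k | ∃ s : Finset V, s.card = k ∧ ∀ v ∈ s, k - 1 ≤ starDegree G v}

/-- The maximum degree `Δ(G)` of a graph. -/
noncomputable def maxDeg (G : SimpleGraph V) : ℕ :=
  sSup {d | ∃ v : V, (G.neighborSet v).ncard = d}

/-- The *b-chromatic number* `φ(G)`: the maximum number of colors of a proper coloring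
in which every color class contains a vertex whose closed neighborhood contains
all the colors. -/
noncomputable def bChromaticNumber [Fintype V] (G : SimpleGraph V) : ℕ :=
  sSup {k | ∃ c : V → ℕ, (∀ ⦃u w⦄, G.Adj u w → c u ≠ c w) ∧ (colorsUsed c).card = k ∧
    ∀ i ∈ colorsUsed c, ∃ v, c v = i ∧
      ∀ j ∈ colorsUsed c, ∃ u, (u = v ∨ G.Adj v u) ∧ c u = j}

/-- The join `G ∨ H` of two simple graphs: disjoint union of `G` and `H`
together with all edges between the two vertex sets. -/
def graphJoin {α β : Type*} (G : SimpleGraph α) (H : SimpleGraph β) :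
    SimpleGraph (α ⊕ β) where
  Adj x y :=
    (∃ a b, x = Sum.inl a ∧ y = Sum.inl b ∧ G.Adj a b) ∨
    (∃ a b, x = Sum.inr a ∧ y = Sum.inr b ∧ H.Adj a b) ∨
    (∃ a b, x = Sum.inl a ∧ y = Sum.inr b) ∨
    (∃ a b, x = Sum.inr a ∧ y = Sum.inl b)
  symm := by
    constructor
    rintro x y (⟨a,b,rfl,rfl,h⟩|⟨a,b,rfl,rfl,h⟩|⟨a,b,rfl,rfl⟩|⟨a,b,rfl,rfl⟩)
    · exact Or.inl ⟨b, a, rfl, rfl, h.symm⟩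
    · exact Or.inr (Or.inl ⟨b, a, rfl, rfl, h.symm⟩)
    · exact Or.inr (Or.inr (Or.inr ⟨b, a, rfl, rfl⟩))
    · exact Or.inr (Or.inr (Or.inl ⟨b, a, rfl, rfl⟩))
  loopless := by
    constructor
    rintro x (⟨a,b,h1,h2,h⟩|⟨a,b,h1,h2,h⟩|⟨a,b,h1,h2⟩|⟨a,b,h1,h2⟩) <;> subst h1 <;>
      simp_all [SimpleGraph.irrefl]

/-- `N₂(v)`: vertices at distance exactly two from `v`. -/
def distTwoSet (G : SimpleGraph V) (v : V) : Set V := {u | G.dist v u = 2}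

/-- `N₃(v)`: vertices at distance exactly three from `v`. -/
def distThreeSet (G : SimpleGraph V) (v : V) : Set V := {u | G.dist v u = 3}

/-- `X(v)`: vertices at distance two from `v` with no neighbor at distance three from `v`. -/
def XSet (G : SimpleGraph V) (v : V) : Set V :=
  {u | u ∈ distTwoSet G v ∧ ∀ w ∈ distThreeSet G v, ¬ G.Adj u w}

/-- `Y(v)`: vertices at distance two from `v` having a neighbor at distance three from `v`. -/
def YSet (G : SimpleGraph V) (v : V) : Set V := distTwoSet G v \ XSet G v


/-!
A universal vertex `u` of `K₁ ∨ H` is the only vertex of its color in every star coloring, so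
it lies on no bicolored path, and a recoloring step can never recolor it: it would have to take
a color already used on `H`, which it is adjacent to. Hence the star b-colorings of `K₁ ∨ H` are
exactly the star b-colorings of `H` extended by a fresh color on `u`, and
`Sᵦ(K₁ ∨ H) = Sᵦ(H) + 1`. This gives the wheel and the fan at once. Since
`Kₙ ∨ H ≅ K₁ ∨ (Kₙ₋₁ ∨ H)`, induction gives `Sᵦ(Kₙ ∨ H) = Sᵦ(H) + n`, and an edgeless graph has
`Sᵦ = 1`, because any two color classes of it can be merged.
-/

open Sum SimpleGraph

variable {α β γ : Type*}

lemma mem_colorsUsed [Fintype V] {c : V → ℕ} {j : ℕ} :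
    j ∈ colorsUsed c ↔ ∃ v, c v = j := by
  simp [colorsUsed]

lemma colorsUsed_card_le [Fintype V] (c : V → ℕ) : (colorsUsed c).card ≤ Fintype.card V :=
  Finset.card_image_le

lemma colorsUsed_nonempty [Fintype V] [Nonempty V] (c : V → ℕ) : (colorsUsed c).Nonempty :=
  Finset.univ_nonempty.image c

lemma colorsUsed_comp_equiv [Fintype α] [Fintype β] (c : β → ℕ) (e : α ≃ β) :
    colorsUsed (c ∘ e) = colorsUsed c := by
  ext j
  simp only [mem_colorsUsed, Function.comp_apply]
  exact ⟨fun ⟨v, hv⟩ => ⟨e v, hv⟩,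
    fun ⟨u, hu⟩ => ⟨e.symm u, by rwa [e.apply_symm_apply]⟩⟩

lemma isStarColoring_of_injective {G : SimpleGraph V} {c : V → ℕ} (hc : c.Injective) :
    IsStarColoring G c :=
  ⟨fun _ _ h => hc.ne h.ne, fun _ _ _ _ _ _ _ hax _ _ h => hax (hc h.1)⟩

lemma isStarColoring_bot (c : V → ℕ) : IsStarColoring (⊥ : SimpleGraph V) c :=
  ⟨fun _ _ h => h.elim, fun _ _ _ _ h => h.elim⟩

lemma StarRecolorStep.card_lt [Fintype V] {G : SimpleGraph V} {c' c : V → ℕ}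
    (h : StarRecolorStep G c' c) : (colorsUsed c').card < (colorsUsed c).card := by
  obtain ⟨_, _, i, hi, hkeep, hchg⟩ := h
  have hsub : colorsUsed c' ⊆ (colorsUsed c).erase i := by
    intro j hj
    obtain ⟨v, rfl⟩ := mem_colorsUsed.mp hj
    by_cases hvi : c v = i
    · exact Finset.mem_erase.mpr (hchg v hvi)
    · rw [hkeep v hvi]
      exact Finset.mem_erase.mpr ⟨hvi, mem_colorsUsed.mpr ⟨v, rfl⟩⟩
  exact (Finset.card_le_card hsub).trans_lt (Finset.card_erase_lt_of_mem hi)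

section StarBChromaticNumber

variable [Fintype V]

/-- A star coloring with the fewest colors admits no recoloring step. -/
lemma exists_isStarBColoring (G : SimpleGraph V) : ∃ c, IsStarBColoring G c := by
  obtain ⟨c, hc, hmin⟩ := (measure fun c : V → ℕ => (colorsUsed c).card).wf.has_min
    {c | IsStarColoring G c}
    ⟨_, isStarColoring_of_injective (Fin.val_injective.comp (Fintype.equivFin V).injective)⟩
  exact ⟨c, hc, fun c' h => hmin c' h.2.1 h.card_lt⟩

lemma bddAbove_starBColoring_card (G : SimpleGraph V) :
    BddAbove {n | ∃ c : V → ℕ, IsStarBColoring G c ∧ (colorsUsed c).card = n} :=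
  ⟨Fintype.card V, by rintro _ ⟨c, -, rfl⟩; exact colorsUsed_card_le c⟩

lemma IsStarBColoring.card_le_starBChromaticNumber {G : SimpleGraph V} {c : V → ℕ}
    (h : IsStarBColoring G c) : (colorsUsed c).card ≤ starBChromaticNumber G :=
  le_csSup (bddAbove_starBColoring_card G) ⟨c, h, rfl⟩

lemma exists_isStarBColoring_card_eq (G : SimpleGraph V) :
    ∃ c, IsStarBColoring G c ∧ (colorsUsed c).card = starBChromaticNumber G :=
  have ⟨c, hc⟩ := exists_isStarBColoring G
  Nat.sSup_mem (s := {n | ∃ c : V → ℕ, IsStarBColoring G c ∧ (colorsUsed c).card = n})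
    ⟨_, c, hc, rfl⟩ (bddAbove_starBColoring_card G)

lemma starBChromaticNumber_bot [Nonempty V] : starBChromaticNumber (⊥ : SimpleGraph V) = 1 := by
  apply le_antisymm
  · obtain ⟨c, hc, hcard⟩ := exists_isStarBColoring_card_eq (⊥ : SimpleGraph V)
    rw [← hcard, Finset.card_le_one]
    intro i hi j hj
    by_contra hij
    refine hc.2 (fun v => if c v = i then j else c v)
      ⟨hc.1, isStarColoring_bot _, i, hi, fun v hv => if_neg hv, fun v hv => ?_⟩
    simp only [hv, if_true]
    exact ⟨Ne.symm hij, hj⟩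
  · obtain ⟨c, hc⟩ := exists_isStarBColoring (⊥ : SimpleGraph V)
    exact (colorsUsed_nonempty c).card_pos.trans_le hc.card_le_starBChromaticNumber

end StarBChromaticNumber

namespace SimpleGraph.Iso

variable {G : SimpleGraph α} {G' : SimpleGraph β}

lemma isStarColoring_comp (e : G ≃g G') {c : β → ℕ} (h : IsStarColoring G' c) :
    IsStarColoring G (c ∘ e) :=
  ⟨fun _ _ huw => h.1 (e.map_adj_iff.mpr huw),
    fun _ _ _ _ hab hbx hxy hax hby hay => h.2 _ _ _ _ (e.map_adj_iff.mpr hab)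
      (e.map_adj_iff.mpr hbx) (e.map_adj_iff.mpr hxy) (e.injective.ne hax) (e.injective.ne hby)
      (e.injective.ne hay)⟩

variable [Fintype α] [Fintype β]

lemma starRecolorStep_comp (e : G ≃g G') {c' c : β → ℕ} (h : StarRecolorStep G' c' c) :
    StarRecolorStep G (c' ∘ e) (c ∘ e) := by
  obtain ⟨hc, hc', i, hi, hkeep, hchg⟩ := h
  rw [← colorsUsed_comp_equiv c e.toEquiv] at hi hchg
  exact ⟨e.isStarColoring_comp hc, e.isStarColoring_comp hc', i, hi,
    fun v => hkeep (e v), fun v => hchg (e v)⟩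

lemma isStarBColoring_comp (e : G ≃g G') {c : β → ℕ} (h : IsStarBColoring G' c) :
    IsStarBColoring G (c ∘ e) := by
  refine ⟨e.isStarColoring_comp h.1, fun d hd => h.2 (d ∘ e.symm) ?_⟩
  simpa [Function.comp_def] using e.symm.starRecolorStep_comp hd

lemma starBChromaticNumber_le (e : G ≃g G') :
    starBChromaticNumber G' ≤ starBChromaticNumber G := by
  obtain ⟨c, hc, hcard⟩ := exists_isStarBColoring_card_eq G'
  rw [← hcard, ← colorsUsed_comp_equiv c e.toEquiv]
  exact (e.isStarBColoring_comp hc).card_le_starBChromaticNumber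

lemma starBChromaticNumber_eq (e : G ≃g G') :
    starBChromaticNumber G = starBChromaticNumber G' :=
  le_antisymm e.symm.starBChromaticNumber_le e.starBChromaticNumber_le

end SimpleGraph.Iso

section GraphJoin

variable {G : SimpleGraph α} {G' : SimpleGraph γ} {H : SimpleGraph β}

@[simp] lemma graphJoin_adj_inl_inl {a a' : α} :
    (graphJoin G H).Adj (inl a) (inl a') ↔ G.Adj a a' := by
  simp [graphJoin]

@[simp] lemma graphJoin_adj_inr_inr {b b' : β} :
    (graphJoin G H).Adj (inr b) (inr b') ↔ H.Adj b b' := by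
  simp [graphJoin]

@[simp] lemma graphJoin_adj_inl_inr (a : α) (b : β) : (graphJoin G H).Adj (inl a) (inr b) :=
  Or.inr (Or.inr (Or.inl ⟨a, b, rfl, rfl⟩))

@[simp] lemma graphJoin_adj_inr_inl (b : β) (a : α) : (graphJoin G H).Adj (inr b) (inl a) :=
  Or.inr (Or.inr (Or.inr ⟨b, a, rfl, rfl⟩))

def graphJoinCongrLeft (e : G ≃g G') : graphJoin G H ≃g graphJoin G' H where
  toEquiv := Equiv.sumCongr e.toEquiv (Equiv.refl β)
  map_rel_iff' := by
    rintro (a | b) (a' | b')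
    · simpa using e.map_adj_iff
    all_goals simp

def graphJoinTopSum : graphJoin (⊤ : SimpleGraph (α ⊕ γ)) H ≃g
    graphJoin (⊤ : SimpleGraph α) (graphJoin (⊤ : SimpleGraph γ) H) where
  toEquiv := Equiv.sumAssoc α γ β
  map_rel_iff' := by rintro ((a | b) | c) ((a' | b') | c') <;> simp

def graphJoinOfIsEmpty [IsEmpty α] : graphJoin G H ≃g H where
  toEquiv := Equiv.emptySum α β
  map_rel_iff' := by
    rintro (a | b) (a' | b') <;> first | exact isEmptyElim ‹α› | simp

end GraphJoin

section UniversalVertex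

variable {H : SimpleGraph β}

lemma isStarColoring_graphJoin_fin_one_iff {c : Fin 1 ⊕ β → ℕ} :
    IsStarColoring (graphJoin (⊤ : SimpleGraph (Fin 1)) H) c ↔
      IsStarColoring H (c ∘ inr) ∧ ∀ b, c (inr b) ≠ c (inl 0) := by
  constructor
  · rintro ⟨hproper, hstar⟩
    refine ⟨⟨fun b b' h => hproper (graphJoin_adj_inr_inr.mpr h), ?_⟩,
      fun b => hproper (graphJoin_adj_inr_inl b 0)⟩
    intro a b x y hab hbx hxy hax hby hay
    exact hstar _ _ _ _ (graphJoin_adj_inr_inr.mpr hab) (graphJoin_adj_inr_inr.mpr hbx)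
      (graphJoin_adj_inr_inr.mpr hxy) (inr_injective.ne hax) (inr_injective.ne hby)
      (inr_injective.ne hay)
  · rintro ⟨⟨hproper, hstar⟩, hub⟩
    -- the hub is the only vertex of its color
    have off_hub : ∀ {v w}, v ≠ w → c v = c w → ∃ b, v = inr b := by
      rintro (a | b) (a' | b') hvw h
      · exact absurd (congrArg inl (Subsingleton.elim a a')) hvw
      · rw [Subsingleton.elim a 0] at h
        exact absurd h.symm (hub b')
      all_goals exact ⟨b, rfl⟩
    refine ⟨fun v w h hc => ?_, fun a b x y hab hbx hxy hax hby hay ⟨hcax, hcby⟩ => ?_⟩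
    · obtain ⟨v, rfl⟩ := off_hub h.ne hc
      obtain ⟨w, rfl⟩ := off_hub h.ne.symm hc.symm
      exact hproper (graphJoin_adj_inr_inr.mp h) hc
    · obtain ⟨a, rfl⟩ := off_hub hax hcax
      obtain ⟨x, rfl⟩ := off_hub (Ne.symm hax) hcax.symm
      obtain ⟨b, rfl⟩ := off_hub hby hcby
      obtain ⟨y, rfl⟩ := off_hub (Ne.symm hby) hcby.symm
      exact hstar a b x y (graphJoin_adj_inr_inr.mp hab) (graphJoin_adj_inr_inr.mp hbx)
        (graphJoin_adj_inr_inr.mp hxy) (ne_of_apply_ne inr hax) (ne_of_apply_ne inr hby)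
        (ne_of_apply_ne inr hay) ⟨hcax, hcby⟩

variable [Fintype β]

lemma colorsUsed_fin_one_sum (c : Fin 1 ⊕ β → ℕ) :
    colorsUsed c = insert (c (inl 0)) (colorsUsed (c ∘ inr)) := by
  ext j
  simp only [mem_colorsUsed, Finset.mem_insert, Function.comp_apply]
  constructor
  · rintro ⟨a | b, rfl⟩
    · exact .inl (by rw [Subsingleton.elim a 0])
    · exact .inr ⟨b, rfl⟩
  · rintro (rfl | ⟨b, rfl⟩)
    exacts [⟨inl 0, rfl⟩, ⟨inr b, rfl⟩]

lemma colorsUsed_card_fin_one_sum {c : Fin 1 ⊕ β → ℕ}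
    (hub : ∀ b, c (inr b) ≠ c (inl 0)) :
    (colorsUsed c).card = (colorsUsed (c ∘ inr)).card + 1 := by
  rw [colorsUsed_fin_one_sum, Finset.card_insert_of_notMem]
  rintro hmem
  obtain ⟨b, hb⟩ := mem_colorsUsed.mp hmem
  exact hub b hb

lemma StarRecolorStep.graphJoin_fin_one {c : Fin 1 ⊕ β → ℕ} {d' : β → ℕ}
    (hc : IsStarColoring (graphJoin (⊤ : SimpleGraph (Fin 1)) H) c)
    (h : StarRecolorStep H d' (c ∘ inr)) :
    StarRecolorStep (graphJoin (⊤ : SimpleGraph (Fin 1)) H)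
      (Sum.elim (fun _ => c (inl 0)) d') c := by
  have hub := (isStarColoring_graphJoin_fin_one_iff.mp hc).2
  obtain ⟨-, hd', i, hi, hkeep, hchg⟩ := h
  have hd'_mem : ∀ b, d' b ∈ colorsUsed (c ∘ inr) := fun b => by
    by_cases hb : c (inr b) = i
    · exact (hchg b hb).2
    · rw [hkeep b hb]
      exact mem_colorsUsed.mpr ⟨b, rfl⟩
  have hi_hub : c (inl 0) ≠ i := fun h0 => by
    obtain ⟨b, hb⟩ := mem_colorsUsed.mp hi
    exact hub b (hb.trans h0.symm)
  have hsub : colorsUsed (c ∘ inr) ⊆ colorsUsed c :=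
    colorsUsed_fin_one_sum c ▸ Finset.subset_insert _ _
  refine ⟨hc, isStarColoring_graphJoin_fin_one_iff.mpr ⟨hd', fun b hb => ?_⟩,
    i, hsub hi, ?_, ?_⟩
  · obtain ⟨b', hb'⟩ := mem_colorsUsed.mp (hd'_mem b)
    exact hub b' (hb'.trans hb)
  · rintro (a | b) hv
    · rw [Subsingleton.elim a 0]
      rfl
    · exact hkeep b hv
  · rintro (a | b) hv
    · rw [Subsingleton.elim a 0] at hv
      exact absurd hv hi_hub
    · exact ⟨(hchg b hv).1, hsub (hchg b hv).2⟩

/-- The hub cannot be recolored: its new color would be taken from `H`, where it is kept. -/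
lemma StarRecolorStep.comp_inr {c' c : Fin 1 ⊕ β → ℕ}
    (h : StarRecolorStep (graphJoin (⊤ : SimpleGraph (Fin 1)) H) c' c) :
    StarRecolorStep H (c' ∘ inr) (c ∘ inr) := by
  obtain ⟨hc, hc', i, hi, hkeep, hchg⟩ := h
  obtain ⟨hcH, hub⟩ := isStarColoring_graphJoin_fin_one_iff.mp hc
  obtain ⟨hc'H, hub'⟩ := isStarColoring_graphJoin_fin_one_iff.mp hc'
  have hi_hub : c (inl 0) ≠ i := fun h0 => by
    obtain ⟨hne, hmem⟩ := hchg (inl 0) h0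
    rw [colorsUsed_fin_one_sum, Finset.mem_insert, h0] at hmem
    rcases hmem with h' | hmem
    · exact hne h'
    · obtain ⟨b, hb⟩ := mem_colorsUsed.mp hmem
      have hbi : c (inr b) ≠ i := fun h'' => hub b (h''.trans h0.symm)
      exact hub' b ((hkeep (inr b) hbi).trans hb)
  have hkeep_hub : c' (inl 0) = c (inl 0) := hkeep (inl 0) hi_hub
  rw [colorsUsed_fin_one_sum, Finset.mem_insert] at hi
  refine ⟨hcH, hc'H, i, hi.resolve_left (Ne.symm hi_hub), fun b => hkeep (inr b),
    fun b hb => ?_⟩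
  obtain ⟨hne, hmem⟩ := hchg (inr b) hb
  rw [colorsUsed_fin_one_sum, Finset.mem_insert, ← hkeep_hub] at hmem
  exact ⟨hne, hmem.resolve_left (hub' b)⟩

lemma isStarBColoring_graphJoin_fin_one_iff {c : Fin 1 ⊕ β → ℕ} :
    IsStarBColoring (graphJoin (⊤ : SimpleGraph (Fin 1)) H) c ↔
      IsStarBColoring H (c ∘ inr) ∧ ∀ b, c (inr b) ≠ c (inl 0) := by
  constructor
  · rintro ⟨hc, hmin⟩
    exact ⟨⟨(isStarColoring_graphJoin_fin_one_iff.mp hc).1,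
      fun d' hd' => hmin _ (hd'.graphJoin_fin_one hc)⟩,
      (isStarColoring_graphJoin_fin_one_iff.mp hc).2⟩
  · rintro ⟨⟨hcH, hmin⟩, hub⟩
    exact ⟨isStarColoring_graphJoin_fin_one_iff.mpr ⟨hcH, hub⟩,
      fun c' hc' => hmin _ hc'.comp_inr⟩

theorem starBChromaticNumber_graphJoin_fin_one (H : SimpleGraph β) :
    starBChromaticNumber (graphJoin (⊤ : SimpleGraph (Fin 1)) H) =
      starBChromaticNumber H + 1 := by
  apply le_antisymm
  · obtain ⟨c, hc, hcard⟩ :=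
      exists_isStarBColoring_card_eq (graphJoin (⊤ : SimpleGraph (Fin 1)) H)
    obtain ⟨hcH, hub⟩ := isStarBColoring_graphJoin_fin_one_iff.mp hc
    rw [← hcard, colorsUsed_card_fin_one_sum hub]
    exact Nat.add_le_add_right hcH.card_le_starBChromaticNumber 1
  · obtain ⟨d, hd, hcard⟩ := exists_isStarBColoring_card_eq H
    obtain ⟨N, hN⟩ := Infinite.exists_notMem_finset (colorsUsed d)
    let c : Fin 1 ⊕ β → ℕ := Sum.elim (fun _ => N) d
    have hub : ∀ b, c (inr b) ≠ c (inl 0) := fun b hb => hN (mem_colorsUsed.mpr ⟨b, hb⟩)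
    have hc := isStarBColoring_graphJoin_fin_one_iff.mpr ⟨hd, hub⟩
    rw [← hcard]
    exact (colorsUsed_card_fin_one_sum hub).symm.trans_le hc.card_le_starBChromaticNumber

end UniversalVertex

theorem starBChromaticNumber_graphJoin_top [Fintype β] (n : ℕ) (H : SimpleGraph β) :
    starBChromaticNumber (graphJoin (⊤ : SimpleGraph (Fin n)) H) =
      starBChromaticNumber H + n := by
  induction n with
  | zero => exact graphJoinOfIsEmpty.starBChromaticNumber_eq
  | succ n ih =>
    let top_succ : (⊤ : SimpleGraph (Fin (n + 1))) ≃g (⊤ : SimpleGraph (Fin 1 ⊕ Fin n)) :=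
      Iso.completeGraph ((finCongr (n.add_comm 1)).trans finSumFinEquiv.symm)
    let e : graphJoin (⊤ : SimpleGraph (Fin (n + 1))) H ≃g
        graphJoin (⊤ : SimpleGraph (Fin 1)) (graphJoin (⊤ : SimpleGraph (Fin n)) H) :=
      (graphJoinCongrLeft top_succ).trans graphJoinTopSum
    rw [e.starBChromaticNumber_eq, starBChromaticNumber_graphJoin_fin_one, ih, add_assoc]

theorem starBChromaticNumber_wheel_fan_split_general (k l n m : ℕ) (hm : 0 < m) :
    starBChromaticNumber
        (graphJoin (⊤ : SimpleGraph (Fin 1)) (SimpleGraph.cycleGraph (k - 1))) =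
      starBChromaticNumber (SimpleGraph.cycleGraph (k - 1)) + 1 ∧
    starBChromaticNumber
        (graphJoin (⊤ : SimpleGraph (Fin 1)) (SimpleGraph.pathGraph (l - 1))) =
      starBChromaticNumber (SimpleGraph.pathGraph (l - 1)) + 1 ∧
    starBChromaticNumber (graphJoin (⊤ : SimpleGraph (Fin n)) (⊥ : SimpleGraph (Fin m))) =
      n + 1 := by
  have : Nonempty (Fin m) := Fin.pos_iff_nonempty.mp hm
  refine ⟨starBChromaticNumber_graphJoin_fin_one _,
    starBChromaticNumber_graphJoin_fin_one _, ?_⟩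
  rw [starBChromaticNumber_graphJoin_top, starBChromaticNumber_bot, add_comm]

/-- **Corollary (wheels, fans and complete split graphs).** For integers `k, l ≥ 4` and
positive integers `n, m`: the wheel `W_k = K₁ ∨ C_{k-1}` satisfies
`Sᵦ(W_k) = Sᵦ(C_{k-1}) + 1`; the fan `F_l = K₁ ∨ P_{l-1}` satisfies
`Sᵦ(F_l) = Sᵦ(P_{l-1}) + 1`; and the complete split graph `Kₙ ∨ K̄ₘ` satisfies
`Sᵦ(Kₙ ∨ K̄ₘ) = n + 1`. -/
theorem starBChromaticNumber_wheel_fan_split (k l n m : ℕ) (hk : 4 ≤ k) (hl : 4 ≤ l)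
    (hn : 0 < n) (hm : 0 < m) :
    starBChromaticNumber
        (graphJoin (⊤ : SimpleGraph (Fin 1)) (SimpleGraph.cycleGraph (k - 1))) =
      starBChromaticNumber (SimpleGraph.cycleGraph (k - 1)) + 1 ∧
    starBChromaticNumber
        (graphJoin (⊤ : SimpleGraph (Fin 1)) (SimpleGraph.pathGraph (l - 1))) =
      starBChromaticNumber (SimpleGraph.pathGraph (l - 1)) + 1 ∧
    starBChromaticNumber (graphJoin (⊤ : SimpleGraph (Fin n)) (⊥ : SimpleGraph (Fin m))) =
      n + 1 :=
  starBChromaticNumber_wheel_fan_split_general k l n m hm
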